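/- Let c > 0 and let C = { (x,y,z) ∈ ℝ³ : |y| > max( 4c·|x|, √(32c·|z|) ) }. For i = 1, 2 let t_i ≥ 0 and let α_i = (α_{i,x}, α_{i,y}, α_{i,z}): [0, t_i] → ℝ³ be Lipschitz curves such that: α_{i,x}(t) = α_{i,x}(0) + t for all t (unit x-speed); α_{i,z}'(t) = (α_{i,x}(t)·α_{i,y}'(t) − α_{i,y}(t)·α_{i,x}'(t))/2 for almost every t (horizontality); the function y∘α_i is Lipschitz with constant < c; α₁(0) = α₂(0); and the projections do not cross, i.e., either α_{1,y}(t) ≤ α_{2,y}(t) for all t ∈ [0, min(t₁,t₂)] or α_{1,y}(t) ≥ α_{2,y}(t) for all t ∈ [0, min(t₁,t₂)]. Let p_i = α_i(t_i). Then p₁⁻¹·p₂ ∉ C, where the inverse and product are taken in the Heisenberg group. -/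

import Mathlib

open MeasureTheory Set

/-- The Heisenberg group product on `ℝ³`. -/
noncomputable def hmul (p q : ℝ × ℝ × ℝ) : ℝ × ℝ × ℝ :=
  (p.1 + q.1, p.2.1 + q.2.1, p.2.2 + q.2.2 + (p.1 * q.2.1 - p.2.1 * q.1) / 2)

/-- The Heisenberg group inverse on `ℝ³`. -/
noncomputable def hinv (p : ℝ × ℝ × ℝ) : ℝ × ℝ × ℝ := (-p.1, -p.2.1, -p.2.2)

/-!
Along a horizontal curve with unit `x`-speed, `z - x y / 2` has derivative `-y`, so the
`z`-coordinate of `p₁⁻¹ p₂` is a signed area between the two `y`-profiles. Inversion and the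
reflection `(x, y, z) ↦ (x, -y, -z)` preserve the cone, so we may assume `T₁ ≤ T₂` and `y₁ ≤ y₂`.
Since both profiles are `c`-Lipschitz, the gap `D = y₂(T₁) - y₁(T₁)` cannot open faster than
`2c`, which makes the area between the profiles at least `D² / (4c)`, and `y₂` stays within
`c (T₂ - t)` of its final value on `[T₁, T₂]`. If `|y| > 4c|x|`, this forces `z ≤ -D² / (4c)` and
`D > 3|y| / 4`, hence `32 c |z| ≥ 8 D² > y²`.
-/

open scoped NNReal

theorem AbsolutelyContinuousOnInterval.integral_eq_sub_of_ae_hasDerivAt {u g : ℝ → ℝ} {a b : ℝ}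
    (hab : a ≤ b) (hu : AbsolutelyContinuousOnInterval u a b)
    (hd : ∀ᵐ t ∂volume.restrict (Icc a b), HasDerivAt u (g t) t) :
    ∫ t in a..b, g t = u b - u a := by
  rw [← hu.integral_deriv_eq_sub]
  refine intervalIntegral.integral_congr_ae ?_
  rw [uIoc_of_le hab]
  filter_upwards [(ae_restrict_iff' measurableSet_Icc).1 hd] with t ht htI
  exact (ht (Ioc_subset_Icc_self htI)).deriv.symm

theorem z_sub_half_mul_eq_of_horizontal {γ : ℝ → ℝ × ℝ × ℝ} {T : ℝ} (hT : 0 ≤ T)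
    (hlip : ∃ K : ℝ≥0, LipschitzOnWith K γ (Icc 0 T))
    (hx : ∀ t ∈ Icc 0 T, (γ t).1 = (γ 0).1 + t)
    (hhoriz : ∀ᵐ t ∂(volume.restrict (Icc 0 T)), ∃ xd yd : ℝ,
      HasDerivAt (fun u => (γ u).1) xd t ∧ HasDerivAt (fun u => (γ u).2.1) yd t ∧
      HasDerivAt (fun u => (γ u).2.2) (((γ t).1 * yd - (γ t).2.1 * xd) / 2) t) :
    (γ T).2.2 - (γ T).1 * (γ T).2.1 / 2
      = (γ 0).2.2 - (γ 0).1 * (γ 0).2.1 / 2 - ∫ t in 0..T, (γ t).2.1 := by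
  obtain ⟨K, hK⟩ := hlip
  rw [← uIcc_of_le hT] at hK
  have hac : ∀ (f : ℝ × ℝ × ℝ → ℝ) (L : ℝ≥0), LipschitzWith L f →
      AbsolutelyContinuousOnInterval (fun t => f (γ t)) 0 T :=
    fun f L hf => (hf.comp_lipschitzOnWith hK).absolutelyContinuousOnInterval
  have hu : AbsolutelyContinuousOnInterval
      (fun t => (γ t).2.2 - (γ t).1 * (γ t).2.1 / 2) 0 T := by
    have hu := (hac _ _ (LipschitzWith.prod_snd.comp LipschitzWith.prod_snd)).fun_sub
      (((hac _ _ LipschitzWith.prod_fst).fun_mul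
        (hac _ _ (LipschitzWith.prod_fst.comp LipschitzWith.prod_snd))).const_mul (1 / 2))
    have e : (fun t => (Prod.snd ∘ Prod.snd) (γ t)
          - 1 / 2 * ((γ t).1 * (Prod.fst ∘ Prod.snd) (γ t)))
        = fun t => (γ t).2.2 - (γ t).1 * (γ t).2.1 / 2 := by
      funext t
      simp only [Function.comp_apply]
      ring
    rwa [e] at hu
  have hinterior : ∀ᵐ t ∂volume.restrict (Icc 0 T), t ∈ Ioo 0 T := by
    rw [← Measure.restrict_congr_set Ioo_ae_eq_Icc]
    exact ae_restrict_mem measurableSet_Ioo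
  have hd : ∀ᵐ t ∂volume.restrict (Icc 0 T),
      HasDerivAt (fun t => (γ t).2.2 - (γ t).1 * (γ t).2.1 / 2) (-(γ t).2.1) t := by
    filter_upwards [hhoriz, hinterior] with t ⟨xd, yd, hxd, hyd, hzd⟩ ht
    have hx1 : HasDerivAt (fun u => (γ u).1) 1 t :=
      ((hasDerivAt_id t).const_add (γ 0).1).congr_of_eventuallyEq
        (Filter.eventually_of_mem (Ioo_mem_nhds ht.1 ht.2)
          fun u hu => hx u (Ioo_subset_Icc_self hu))
    rw [hxd.unique hx1] at hzd
    exact (hzd.sub ((hx1.fun_mul hyd).div_const 2)).congr_deriv (by ring)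
  have := hu.integral_eq_sub_of_ae_hasDerivAt hT hd
  rw [intervalIntegral.integral_neg] at this
  linarith

theorem LipschitzOnWith.sub_le_intervalIntegral {f : ℝ → ℝ} {L : ℝ≥0} {a b : ℝ} (hab : a ≤ b)
    (hf : LipschitzOnWith L f (Icc a b)) :
    f b * (b - a) - L * (b - a) ^ 2 / 2 ≤ ∫ t in a..b, f t := by
  have hlow : ∀ t ∈ Icc a b, f b - L * (b - t) ≤ f t := by
    intro t ht
    have := hf.dist_le_mul b (right_mem_Icc.2 hab) t ht
    rw [Real.dist_eq, Real.dist_eq, abs_of_nonneg (sub_nonneg.2 ht.2)] at this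
    linarith [le_abs_self (f b - f t)]
  calc f b * (b - a) - L * (b - a) ^ 2 / 2 = ∫ t in a..b, (f b - L * (b - t)) := by
        rw [intervalIntegral.integral_sub intervalIntegrable_const
          ((by fun_prop : Continuous fun t : ℝ => (L : ℝ) * (b - t)).intervalIntegrable a b),
          intervalIntegral.integral_const, intervalIntegral.integral_const_mul,
          intervalIntegral.integral_comp_sub_left (fun t => t), integral_id, smul_eq_mul]
        ring
    _ ≤ ∫ t in a..b, f t :=
        intervalIntegral.integral_mono_on hab
          ((by fun_prop : Continuous fun t : ℝ => f b - L * (b - t)).intervalIntegrable a b)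
          (hf.continuousOn.intervalIntegrable_of_Icc hab) hlow

theorem LipschitzOnWith.sq_div_le_intervalIntegral {f : ℝ → ℝ} {L : ℝ≥0} {a b : ℝ} (hab : a ≤ b)
    (hL : 0 < L) (hf : LipschitzOnWith L f (Icc a b)) (hf0 : ∀ t ∈ Icc a b, 0 ≤ f t)
    (hfb : f b ≤ L * (b - a)) :
    f b ^ 2 / (2 * L) ≤ ∫ t in a..b, f t := by
  have hL' : (0 : ℝ) < L := hL
  set s := b - f b / L with hs
  have has : a ≤ s := by
    rw [hs, le_sub_comm, div_le_iff₀ hL', mul_comm]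
    exact hfb
  have hsb : s ≤ b := sub_le_self _ (div_nonneg (hf0 b (right_mem_Icc.2 hab)) hL'.le)
  have hint : ∀ {u v}, a ≤ u → u ≤ v → v ≤ b → IntervalIntegrable f volume u v :=
    fun hu huv hv => (hf.continuousOn.mono (Icc_subset_Icc hu hv)).intervalIntegrable_of_Icc huv
  rw [← intervalIntegral.integral_add_adjacent_intervals (hint le_rfl has hsb)
    (hint has hsb le_rfl)]
  have hleft : 0 ≤ ∫ t in a..s, f t :=
    intervalIntegral.integral_nonneg has fun t ht => hf0 t ⟨ht.1, ht.2.trans hsb⟩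
  have hright := (hf.mono (Icc_subset_Icc_left has)).sub_le_intervalIntegral hsb
  have hval : f b * (b - s) - L * (b - s) ^ 2 / 2 = f b ^ 2 / (2 * L) := by
    rw [hs]
    field_simp
    ring
  linarith

def heisCone (c : ℝ) : Set (ℝ × ℝ × ℝ) :=
  {q | max (4 * c * |q.1|) (Real.sqrt (32 * c * |q.2.2|)) < |q.2.1|}

theorem mem_heisCone_congr_abs {c : ℝ} {q q' : ℝ × ℝ × ℝ} (h₁ : |q.1| = |q'.1|)
    (h₂ : |q.2.1| = |q'.2.1|) (h₃ : |q.2.2| = |q'.2.2|) : q ∈ heisCone c ↔ q' ∈ heisCone c := by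
  simp only [heisCone, mem_ofPred_eq, h₁, h₂, h₃]

theorem notMem_heisCone_of_z_le {c D : ℝ} {q : ℝ × ℝ × ℝ} (hc : 0 < c) (hq₁ : 0 ≤ q.1) (hD : 0 ≤ D)
    (hy : |q.2.1 - D| ≤ c * q.1)
    (hz : q.2.2 ≤ -(D ^ 2 / (4 * c)) - (q.2.1 * q.1 - c * q.1 ^ 2) / 2) :
    q ∉ heisCone c := by
  obtain ⟨Δ, qy, qz⟩ := q
  simp only at hq₁ hy hz
  simp only [heisCone, mem_ofPred_eq, abs_of_nonneg hq₁, max_lt_iff, not_and_or, not_lt]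
  by_contra! H
  obtain ⟨hΔ, hsqrt⟩ := H
  have hy' := abs_le.1 hy
  have hcΔ : 0 ≤ c * Δ := mul_nonneg hc.le hq₁
  have hqy : 0 < qy := by
    rcases abs_cases qy with ⟨h, _⟩ | ⟨h, _⟩ <;> rw [h] at hΔ <;> linarith
  rw [abs_of_pos hqy] at hΔ hsqrt
  have hDqy : 3 * qy < 4 * D := by linarith
  have hqyΔ : 4 * c * Δ ^ 2 ≤ qy * Δ := by nlinarith
  have hDpos : 0 < D := by linarith
  have hD2 : 0 < D ^ 2 / (4 * c) := by positivity
  have hqz : D ^ 2 / (4 * c) ≤ |qz| := by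
    rw [abs_of_neg (by nlinarith)]
    nlinarith
  have h32 : 8 * D ^ 2 ≤ 32 * c * |qz| := by
    have := mul_le_mul_of_nonneg_left hqz (by positivity : (0 : ℝ) ≤ 32 * c)
    rwa [show 32 * c * (D ^ 2 / (4 * c)) = 8 * D ^ 2 by field_simp; ring] at this
  have := (Real.sqrt_lt' hqy).1 hsqrt
  nlinarith

/-- `p₁⁻¹ p₂` for horizontal unit-`x`-speed curves from a common point, with `y`-profiles `y₁, y₂`
run for times `T₁, T₂`; cf. `z_sub_half_mul_eq_of_horizontal`. -/
noncomputable def endpointDiff (y₁ y₂ : ℝ → ℝ) (T₁ T₂ : ℝ) : ℝ × ℝ × ℝ :=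
  (T₂ - T₁, y₂ T₂ - y₁ T₁,
    (y₁ T₁ + y₂ T₂) * (T₂ - T₁) / 2 - ((∫ t in 0..T₂, y₂ t) - ∫ t in 0..T₁, y₁ t))

section

variable {c T₁ T₂ : ℝ} {y₁ y₂ : ℝ → ℝ}

theorem endpointDiff_z_le (hc : 0 < c) (hT₁ : 0 ≤ T₁) (hle : T₁ ≤ T₂)
    (hy₁ : LipschitzOnWith c.toNNReal y₁ (Icc 0 T₁))
    (hy₂ : LipschitzOnWith c.toNNReal y₂ (Icc 0 T₂))
    (hy0 : y₁ 0 = y₂ 0) (horder : ∀ t ∈ Icc 0 T₁, y₁ t ≤ y₂ t) :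
    (endpointDiff y₁ y₂ T₁ T₂).2.2 ≤ -((y₂ T₁ - y₁ T₁) ^ 2 / (4 * c))
      - ((y₂ T₂ - y₁ T₁) * (T₂ - T₁) - c * (T₂ - T₁) ^ 2) / 2 := by
  have hcoe : (c.toNNReal : ℝ) = c := Real.coe_toNNReal c hc.le
  have hy₂' := hy₂.mono (Icc_subset_Icc_right hle)
  have hy₂'' := hy₂.mono (Icc_subset_Icc_left hT₁)
  have hint₁ := hy₁.continuousOn.intervalIntegrable_of_Icc (μ := volume) hT₁
  have hint₂ := hy₂'.continuousOn.intervalIntegrable_of_Icc (μ := volume) hT₁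
  have hint₂' := hy₂''.continuousOn.intervalIntegrable_of_Icc (μ := volume) hle
  have hgap := hy₂'.sub hy₁
  have hgap_end : y₂ T₁ - y₁ T₁ ≤ ↑(c.toNNReal + c.toNNReal) * (T₁ - 0) := by
    have := hgap.dist_le_mul T₁ (right_mem_Icc.2 hT₁) 0 (left_mem_Icc.2 hT₁)
    simp only [Real.dist_eq, hy0, sub_self, sub_zero, abs_of_nonneg hT₁] at this
    rw [sub_zero]
    exact (le_abs_self _).trans this
  have hA := hgap.sq_div_le_intervalIntegral hT₁ (by simpa using hc)
    (fun t ht => sub_nonneg.2 (horder t ht)) hgap_end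
  have hB := hy₂''.sub_le_intervalIntegral hle
  have hsplit : (∫ t in 0..T₂, y₂ t) - ∫ t in 0..T₁, y₁ t
      = (∫ t in 0..T₁, (y₂ t - y₁ t)) + ∫ t in T₁..T₂, y₂ t := by
    rw [← intervalIntegral.integral_add_adjacent_intervals hint₂ hint₂',
      intervalIntegral.integral_sub hint₂ hint₁]
    ring
  push_cast [hcoe] at hA hB
  simp only [endpointDiff]
  rw [hsplit]
  have : (y₂ T₁ - y₁ T₁) ^ 2 / (2 * (c + c)) = (y₂ T₁ - y₁ T₁) ^ 2 / (4 * c) := by ring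
  linarith

theorem endpointDiff_notMem_heisCone_of_le (hc : 0 < c) (hT₁ : 0 ≤ T₁) (hle : T₁ ≤ T₂)
    (hy₁ : LipschitzOnWith c.toNNReal y₁ (Icc 0 T₁))
    (hy₂ : LipschitzOnWith c.toNNReal y₂ (Icc 0 T₂))
    (hy0 : y₁ 0 = y₂ 0) (horder : ∀ t ∈ Icc 0 T₁, y₁ t ≤ y₂ t) :
    endpointDiff y₁ y₂ T₁ T₂ ∉ heisCone c := by
  have hy : |(y₂ T₂ - y₁ T₁) - (y₂ T₁ - y₁ T₁)| ≤ c * (T₂ - T₁) := by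
    have := hy₂.dist_le_mul T₂ ⟨hT₁.trans hle, le_rfl⟩ T₁ ⟨hT₁, hle⟩
    rw [Real.dist_eq, Real.dist_eq, Real.coe_toNNReal c hc.le, abs_of_nonneg (sub_nonneg.2 hle)]
      at this
    rwa [sub_sub_sub_cancel_right]
  exact notMem_heisCone_of_z_le hc (sub_nonneg.2 hle)
    (sub_nonneg.2 (horder T₁ (right_mem_Icc.2 hT₁))) hy
    (endpointDiff_z_le hc hT₁ hle hy₁ hy₂ hy0 horder)

theorem endpointDiff_notMem_heisCone (hc : 0 < c) (hT₁ : 0 ≤ T₁) (hT₂ : 0 ≤ T₂)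
    (hy₁ : LipschitzOnWith c.toNNReal y₁ (Icc 0 T₁))
    (hy₂ : LipschitzOnWith c.toNNReal y₂ (Icc 0 T₂)) (hy0 : y₁ 0 = y₂ 0)
    (hnocross : (∀ t ∈ Icc 0 (min T₁ T₂), y₁ t ≤ y₂ t) ∨ (∀ t ∈ Icc 0 (min T₁ T₂), y₂ t ≤ y₁ t)) :
    endpointDiff y₁ y₂ T₁ T₂ ∉ heisCone c := by
  wlog hle : T₁ ≤ T₂ generalizing y₁ y₂ T₁ T₂
  · rw [mem_heisCone_congr_abs (q' := endpointDiff y₂ y₁ T₂ T₁)]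
    · exact this hT₂ hT₁ hy₂ hy₁ hy0.symm (min_comm T₁ T₂ ▸ hnocross.symm) (le_of_not_ge hle)
    all_goals simp only [endpointDiff]; rw [← abs_neg]; congr 1; ring
  rw [min_eq_left hle] at hnocross
  rcases hnocross with horder | horder
  · exact endpointDiff_notMem_heisCone_of_le hc hT₁ hle hy₁ hy₂ hy0 horder
  · rw [mem_heisCone_congr_abs (q' := endpointDiff (fun t => -y₁ t) (fun t => -y₂ t) T₁ T₂)]
    · exact endpointDiff_notMem_heisCone_of_le hc hT₁ hle hy₁.neg hy₂.neg (by rw [hy0])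
        fun t ht => neg_le_neg (horder t ht)
    all_goals simp only [endpointDiff, intervalIntegral.integral_neg]
    all_goals rw [← abs_neg]; congr 1; ring

end

/-- if two unit `x`-speed horizontal Lipschitz curves start at the same
point, have `y`-coordinates Lipschitz with constant `< c`, and their projections do not
cross, then the Heisenberg difference of their endpoints avoids the scale-invariant
double cone `C = {|y| > max(4c|x|, √(32c|z|))}`. -/
theorem stmt11 (c : ℝ) (hc : 0 < c)
    (T : Fin 2 → ℝ) (hT : ∀ i, 0 ≤ T i)
    (α : Fin 2 → ℝ → ℝ × ℝ × ℝ)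
    (hlip : ∀ i, ∃ K : NNReal, LipschitzOnWith K (α i) (Set.Icc 0 (T i)))
    (hx : ∀ i, ∀ t ∈ Set.Icc 0 (T i), (α i t).1 = (α i 0).1 + t)
    (hylip : ∀ i, ∃ c' : NNReal, (c' : ℝ) < c ∧
      LipschitzOnWith c' (fun t => (α i t).2.1) (Set.Icc 0 (T i)))
    (hhoriz : ∀ i, ∀ᵐ t ∂(volume.restrict (Set.Icc 0 (T i))),
      ∃ xd yd : ℝ,
        HasDerivAt (fun u => (α i u).1) xd t ∧
        HasDerivAt (fun u => (α i u).2.1) yd t ∧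
        HasDerivAt (fun u => (α i u).2.2)
          (((α i t).1 * yd - (α i t).2.1 * xd) / 2) t)
    (hstart : α 0 0 = α 1 0)
    (hnocross :
      (∀ t ∈ Set.Icc 0 (min (T 0) (T 1)), (α 0 t).2.1 ≤ (α 1 t).2.1) ∨
      (∀ t ∈ Set.Icc 0 (min (T 0) (T 1)), (α 1 t).2.1 ≤ (α 0 t).2.1)) :
    hmul (hinv (α 0 (T 0))) (α 1 (T 1)) ∉
      {q : ℝ × ℝ × ℝ |
        max (4 * c * |q.1|) (Real.sqrt (32 * c * |q.2.2|)) < |q.2.1|} := by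
  have hy : ∀ i, LipschitzOnWith c.toNNReal (fun t => (α i t).2.1) (Icc 0 (T i)) := fun i => by
    obtain ⟨c', hc', hl⟩ := hylip i
    exact hl.weaken (by rw [← NNReal.coe_le_coe, Real.coe_toNNReal c hc.le]; exact hc'.le)
  have hxT : ∀ i, (α i (T i)).1 = (α i 0).1 + T i := fun i => hx i (T i) (right_mem_Icc.2 (hT i))
  have harea₀ := z_sub_half_mul_eq_of_horizontal (hT 0) (hlip 0) (hx 0) (hhoriz 0)
  have harea₁ := z_sub_half_mul_eq_of_horizontal (hT 1) (hlip 1) (hx 1) (hhoriz 1)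
  have hq : hmul (hinv (α 0 (T 0))) (α 1 (T 1))
      = endpointDiff (fun t => (α 0 t).2.1) (fun t => (α 1 t).2.1) (T 0) (T 1) := by
    rw [hxT, hstart] at harea₀
    rw [hxT] at harea₁
    simp only [hmul, hinv, endpointDiff, hxT, hstart, Prod.mk.injEq]
    refine ⟨by ring, by ring, by linear_combination harea₁ - harea₀⟩
  rw [hq]
  exact endpointDiff_notMem_heisCone hc (hT 0) (hT 1) (hy 0) (hy 1) (by rw [hstart]) hnocross
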